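/- arXiv:2303.09815 — 6 statements merged into one kernel-verified Lean document; each statement's English description precedes it below -/
import Mathlib

section
/- Let 𝒞 be a class of groups closed under taking subgroups. If 𝒞 is closed under taking Cartesian (unrestricted) wreath products, then 𝒞 satisfies the Gruenberg condition: for any group X and any subnormal series 1 ≤ Z ≤ Y ≤ X with Z normal in Y, Y normal in X, and both factors X/Y and Y/Z in 𝒞, there exists a normal subgroup T of X with T ≤ Z and X/T ∈ 𝒞. -/
universe u

/-- A class of groups: a predicate on groups. -/
def GClass : Type (u + 1) := ∀ (G : Type u) [Group G], Prop

/-- Closure under isomorphism. -/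
def ClosedIso (C : GClass.{u}) : Prop :=
  ∀ (G H : Type u) [Group G] [Group H], (G ≃* H) → C G → C H

/-- Closure under taking subgroups. -/
def ClosedSub (C : GClass.{u}) : Prop :=
  ∀ (G : Type u) [Group G] (H : Subgroup G), C G → C H

/-- Closure under extensions. -/
def ClosedExt (C : GClass.{u}) : Prop :=
  ∀ (G : Type u) [Group G] (N : Subgroup G) [N.Normal], C N → C (G ⧸ N) → C G

/-- Closure under unrestricted direct powers ∏_{y ∈ Y} X with X, Y ∈ C. -/
def ClosedPow (C : GClass.{u}) : Prop :=
  ∀ (X Y : Type u) [Group X] [Group Y], C X → C Y → C (Y → X)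

/-- A root class of groups. -/
def IsRootClass (C : GClass.{u}) : Prop :=
  (∃ (G : Type u) (_ : Group G), C G ∧ Nontrivial G) ∧
    ClosedIso C ∧ ClosedSub C ∧ ClosedExt C ∧ ClosedPow C

/-- `G` is residually a `C`-group. -/
def Residually (C : GClass.{u}) (G : Type u) [Group G] : Prop :=
  ∀ g : G, g ≠ 1 → ∃ (Q : Type u) (_ : Group Q) (σ : G →* Q),
    C Q ∧ Function.Surjective σ ∧ σ g ≠ 1
/-- The action of `B` on the unrestricted direct power `B → A` by translating coordinates. -/
def wreathAct (A B : Type u) [Group A] [Group B] : B →* MulAut (B → A) where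
  toFun b :=
    { toFun := fun f x => f (x * b)
      invFun := fun f x => f (x * b⁻¹)
      left_inv := fun f => funext fun x => by simp
      right_inv := fun f => funext fun x => by simp
      map_mul' := fun f g => rfl }
  map_one' := MulEquiv.ext fun f => funext fun x => by simp
  map_mul' := fun b c => MulEquiv.ext fun f => funext fun x => by simp [mul_assoc]

/-- The Cartesian (unrestricted, regular) wreath product `A Wr B`. -/
def WreathProduct (A B : Type u) [Group A] [Group B] : Type u :=
  (B → A) ⋊[wreathAct A B] B

instance (A B : Type u) [Group A] [Group B] : Group (WreathProduct A B) :=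
  inferInstanceAs (Group ((B → A) ⋊[wreathAct A B] B))

section KK

variable {X : Type u} [Group X] (Y Z : Subgroup X) [Y.Normal]

/-- The "coordinate" of `x` at `q` in the Kaloujnine–Krasner embedding. -/
noncomputable def kkA (x : X) (q : X ⧸ Y) : Y :=
  ⟨q.out * x * (q * (QuotientGroup.mk x : X ⧸ Y)).out⁻¹, by
    rw [← QuotientGroup.eq_one_iff]
    simp [QuotientGroup.mk_mul, QuotientGroup.mk_inv, QuotientGroup.out_eq', mul_assoc]⟩

lemma kkA_mul (x y : X) (q : X ⧸ Y) :
    kkA Y (x * y) q = kkA Y x q * kkA Y y (q * QuotientGroup.mk x) := by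
  apply Subtype.ext
  show _ = (_ * _ : X)
  simp only [kkA, QuotientGroup.mk_mul, ← mul_assoc]
  group

variable [(Z.subgroupOf Y).Normal]

/-- The Kaloujnine–Krasner homomorphism `X → (Y/Z) Wr (X/Y)`. -/
noncomputable def kkHom : X →* WreathProduct ((Y : Type u) ⧸ Z.subgroupOf Y) (X ⧸ Y) where
  toFun x := ⟨fun q => QuotientGroup.mk (kkA Y x q), QuotientGroup.mk x⟩
  map_one' := by
    refine SemidirectProduct.ext (funext fun q => ?_) ?_
    · show (QuotientGroup.mk (kkA Y 1 q) : (Y : Type u) ⧸ Z.subgroupOf Y) = 1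
      rw [QuotientGroup.eq_one_iff]
      have : kkA Y 1 q = 1 := by
        apply Subtype.ext
        show (q.out * 1 * (q * (QuotientGroup.mk 1 : X ⧸ Y)).out⁻¹ : X) = 1
        simp
      rw [this]; exact one_mem _
    · show (QuotientGroup.mk 1 : X ⧸ Y) = 1
      simp
  map_mul' x y := by
    refine SemidirectProduct.ext (funext fun q => ?_) ?_
    · show (QuotientGroup.mk (kkA Y (x * y) q) : (Y : Type u) ⧸ Z.subgroupOf Y) =
        QuotientGroup.mk (kkA Y x q) * QuotientGroup.mk (kkA Y y (q * QuotientGroup.mk x))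
      rw [kkA_mul, QuotientGroup.mk_mul]
    · show (QuotientGroup.mk (x * y) : X ⧸ Y) = QuotientGroup.mk x * QuotientGroup.mk y
      rw [QuotientGroup.mk_mul]

lemma kkHom_ker_le : (kkHom Y Z).ker ≤ Z := by
  intro x hx
  rw [MonoidHom.mem_ker] at hx
  have hr : (QuotientGroup.mk x : X ⧸ Y) = 1 := congrArg SemidirectProduct.right hx
  have hxY : x ∈ Y := (QuotientGroup.eq_one_iff x).mp hr
  have hl : (QuotientGroup.mk (kkA Y x 1) : (Y : Type u) ⧸ Z.subgroupOf Y) = 1 := by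
    have := congrArg SemidirectProduct.left hx
    exact congrFun this 1
  rw [QuotientGroup.eq_one_iff] at hl
  -- kkA Y x 1 = y₀ x y₀⁻¹ with y₀ = (1 : X ⧸ Y).out
  set y₀ : X := (1 : X ⧸ Y).out with hy₀
  have hy₀Y : y₀ ∈ Y := by
    rw [← QuotientGroup.eq_one_iff]
    exact QuotientGroup.out_eq' (1 : X ⧸ Y)
  have hval : (kkA Y x 1 : X) = y₀ * x * y₀⁻¹ := by
    show ((1 : X ⧸ Y).out * x * ((1 : X ⧸ Y) * (QuotientGroup.mk x : X ⧸ Y)).out⁻¹ : X) = _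
    rw [hr, mul_one]
  -- use normality of Z.subgroupOf Y within Y
  have hk : kkA Y x 1 = (⟨y₀, hy₀Y⟩ : Y) * ⟨x, hxY⟩ * (⟨y₀, hy₀Y⟩ : Y)⁻¹ :=
    Subtype.ext (by simpa using hval)
  rw [hk] at hl
  have := (Subgroup.Normal.conj_mem ‹(Z.subgroupOf Y).Normal› _ hl) (⟨y₀, hy₀Y⟩ : Y)⁻¹
  simpa [mul_assoc, Subgroup.mem_subgroupOf] using this

end KK

/-- One direction of Proposition 3.2 (Gruenberg): if `C` is closed under subgroups and under
Cartesian wreath products, then `C` satisfies the Gruenberg condition. -/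
theorem stmt_1 (C : GClass.{u}) (hIso : ClosedIso C) (hSub : ClosedSub C)
    (hWr : ∀ (A B : Type u) [Group A] [Group B], C A → C B → C (WreathProduct A B))
    (X : Type u) [Group X] (Y Z : Subgroup X) [Y.Normal] (hZY : Z ≤ Y)
    [(Z.subgroupOf Y).Normal]
    (hXY : C (X ⧸ Y)) (hYZ : C ((Y : Type u) ⧸ Z.subgroupOf Y)) :
    ∃ (T : Subgroup X) (_ : T.Normal), T ≤ Z ∧ C (X ⧸ T) := by
  refine ⟨(kkHom Y Z).ker, inferInstance, kkHom_ker_le Y Z, ?_⟩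
  have hW : C (WreathProduct ((Y : Type u) ⧸ Z.subgroupOf Y) (X ⧸ Y)) := hWr _ _ hYZ hXY
  have hR : C (kkHom Y Z).range := hSub _ _ hW
  exact hIso _ _ (QuotientGroup.quotientKerEquivRange (kkHom Y Z)).symm hR
end

section
/- If 𝒞 is a root class of groups, G is a group, N is a normal subgroup of G such that N is residually a 𝒞-group and G/N belongs to 𝒞, then G is residually a 𝒞-group. -/
universe u

/-! The kernel `K` of a homomorphism `σ : N → Q` to a `C`-group need not be normal in `G`,
but its normal core `M = ⋂ₓ x K x⁻¹` is, and it is already the intersection of the `[G : N]`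
conjugates by a transversal of `N`, since conjugating by elements of `N` preserves `K`. Hence
`N / M` embeds into the power `Q ^ (G / N)`, which lies in `C`, and `G / M` is an extension of
`N / M` by `G / N`. -/

open QuotientGroup

section Closure

variable {C : GClass.{u}}

theorem ClosedSub.range_of_ker_eq (hSub : ClosedSub C) (hIso : ClosedIso C)
    {H P R : Type u} [Group H] [Group P] [Group R] (hP : C P) {φ : H →* P} {ψ : H →* R}
    (hker : ψ.ker = φ.ker) : C ψ.range :=
  hIso _ _ ((quotientKerEquivRange φ).symm.trans
    ((quotientMulEquivOfEq hker.symm).trans (quotientKerEquivRange ψ))) (hSub P φ.range hP)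

theorem ClosedExt.quotient_of_le (hExt : ClosedExt C) (hIso : ClosedIso C)
    {G : Type u} [Group G] {M N : Subgroup G} [M.Normal] [N.Normal] (hMN : M ≤ N)
    (hNM : C (N.map (mk' M))) (hGN : C (G ⧸ N)) : C (G ⧸ M) :=
  hExt (G ⧸ M) (N.map (mk' M)) hNM
    (hIso _ _ (quotientQuotientEquivQuotient M N hMN).symm hGN)

theorem exists_hom_ne_one_of_notMem {G : Type u} [Group G] {M : Subgroup G} [M.Normal]
    (hM : C (G ⧸ M)) {g : G} (hg : g ∉ M) :
    ∃ (Q : Type u) (_ : Group Q) (σ : G →* Q), C Q ∧ Function.Surjective σ ∧ σ g ≠ 1 :=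
  ⟨G ⧸ M, inferInstance, mk' M, hM, mk'_surjective M, by rwa [mk'_apply, Ne, eq_one_iff]⟩

end Closure

section NormalCore

variable {G : Type u} [Group G] {N : Subgroup G} [N.Normal] {Q : Type u} [Group Q]
  (σ : N →* Q)

noncomputable def conjTransversalPi : N →* (G ⧸ N → Q) :=
  MonoidHom.pi fun y => σ.comp (MulAut.conjNormal (Quotient.out y)⁻¹).toMonoidHom

theorem conjTransversalPi_eq_one_iff (n : N) :
    conjTransversalPi σ n = 1 ↔ ∀ x : G, σ (MulAut.conjNormal x⁻¹ n) = 1 := by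
  refine ⟨fun h x => ?_, fun h => funext fun y => h _⟩
  obtain ⟨m, hm⟩ := mk_out_eq_mul N x
  have hconj :
      MulAut.conjNormal x⁻¹ n = m * MulAut.conjNormal (mk x : G ⧸ N).out⁻¹ n * m⁻¹ := by
    ext
    simp only [Subgroup.coe_mul, InvMemClass.coe_inv, MulAut.conjNormal_apply, hm]
    group
  have ht : σ (MulAut.conjNormal (mk x : G ⧸ N).out⁻¹ n) = 1 := congrFun h (mk x)
  rw [hconj, map_mul, map_mul, ht, mul_one, ← map_mul, mul_inv_cancel, map_one]

theorem mem_normalCore_map_ker_iff (n : N) :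
    (n : G) ∈ (σ.ker.map N.subtype).normalCore ↔
      ∀ x : G, σ (MulAut.conjNormal x⁻¹ n) = 1 := by
  have hconj (x : G) :
      x * n * x⁻¹ ∈ σ.ker.map N.subtype ↔ σ (MulAut.conjNormal x n) = 1 := by
    rw [← MulAut.conjNormal_apply, ← Subgroup.coe_subtype,
      Subgroup.mem_map_iff_mem N.subtype_injective, MonoidHom.mem_ker]
  change (∀ x : G, x * n * x⁻¹ ∈ _) ↔ _
  simp only [hconj]
  exact inv_surjective.forall

theorem ker_mk'_comp_subtype_normalCore :
    ((mk' (σ.ker.map N.subtype).normalCore).comp N.subtype).ker = (conjTransversalPi σ).ker := by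
  ext n
  rw [MonoidHom.mem_ker, MonoidHom.mem_ker, MonoidHom.comp_apply, mk'_apply, eq_one_iff,
    conjTransversalPi_eq_one_iff, Subgroup.coe_subtype, mem_normalCore_map_ker_iff]

theorem ClosedSub.map_mk'_normalCore_map_ker {C : GClass.{u}} (hSub : ClosedSub C)
    (hIso : ClosedIso C) (hPow : ClosedPow C) (hQ : C Q) (hGN : C (G ⧸ N)) :
    C (N.map (mk' (σ.ker.map N.subtype).normalCore)) := by
  have hrange := hSub.range_of_ker_eq hIso (hPow Q (G ⧸ N) hQ hGN)
    (ker_mk'_comp_subtype_normalCore σ)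
  rwa [MonoidHom.range_comp, N.range_subtype] at hrange

end NormalCore

/-- Proposition 3.3 (3) (Gruenberg's lemma): an extension of a residually `C`-group by a
`C`-group is residually a `C`-group, for a root class `C`. -/
theorem stmt_4 (C : GClass.{u}) (hC : IsRootClass C)
    (G : Type u) [Group G] (N : Subgroup G) [N.Normal]
    (hN : Residually C N) (hQ : C (G ⧸ N)) :
    Residually C G := by
  obtain ⟨-, hIso, hSub, hExt, hPow⟩ := hC
  intro g hg
  by_cases hgN : g ∈ N
  · obtain ⟨Q, _, σ, hCQ, -, hσg⟩ := hN ⟨g, hgN⟩ (by simpa using hg)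
    have hMN := (Subgroup.normalCore_le _).trans (Subgroup.map_subtype_le σ.ker)
    have hGM := hExt.quotient_of_le hIso hMN
      (hSub.map_mk'_normalCore_map_ker σ hIso hPow hCQ hQ) hQ
    refine exists_hom_ne_one_of_notMem hGM fun hgM => hσg ?_
    simpa using (mem_normalCore_map_ker_iff σ ⟨g, hgN⟩).1 hgM 1
  · exact exists_hom_ne_one_of_notMem hQ hgN
end

section
/- Let p be a prime and n = p^l with l ≥ 1. Define bijections λ and μ of M = {0, 1, …, n−1} by λ(i) = (i+1) mod n, and μ(i) = i+1 if i ≢ p−1 (mod p), μ(i) = i − (p−1) if i ≡ p−1 (mod p). Then the subgroup X of the symmetric group on M generated by λ and μ satisfies x^n = 1 for every x ∈ X; in particular X is a finite p-group. -/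
/-!
Both generators move every residue class modulo `p ^ k` as a block: `σ i - i` modulo
`p ^ (k + 1)` depends only on `i` modulo `p ^ k`. Permutations with this property form a monoid
(the iterated wreath product of cyclic groups of order `p`), and for such a `σ` the power
`σ ^ p ^ k` fixes every residue class modulo `p ^ k`: if `τ = σ ^ p ^ k` does, then `τ` acts on
each class modulo `p ^ (k + 1)` as a translation by a multiple of `p ^ k`, so `τ ^ p` acts as the
identity there. For `k = l` this gives `σ ^ p ^ l = 1`.
-/

section IteratedWreath

variable {R : Type*} [CommRing R] {p : ℕ}

variable (R p) in
def iteratedWreath : Submonoid (Equiv.Perm R) where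
  carrier := {σ | ∀ k i j, (p : R) ^ k ∣ i - j → (p : R) ^ (k + 1) ∣ (σ i - i) - (σ j - j)}
  one_mem' := by simp
  mul_mem' := by
    intro σ τ hσ hτ k i j hij
    have hτij := hτ k i j hij
    have hτk : (p : R) ^ k ∣ τ i - τ j := by
      have := dvd_add hij ((pow_dvd_pow _ k.le_succ).trans hτij)
      rwa [show i - j + (τ i - i - (τ j - j)) = τ i - τ j by ring] at this
    convert dvd_add (hσ k (τ i) (τ j) hτk) hτij using 1
    simp only [Equiv.Perm.mul_apply]
    ring

theorem mem_iteratedWreath_of_sub_apply {σ : Equiv.Perm R}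
    (hcongr : ∀ i j, (p : R) ∣ (σ i - i) - (σ j - j))
    (hconst : ∀ i j, (p : R) ∣ i - j → σ i - i = σ j - j) :
    σ ∈ iteratedWreath R p := by
  rintro (_ | k) i j hij
  · simpa using hcongr i j
  · rw [hconst i j ((dvd_pow_self _ k.succ_ne_zero).trans hij), sub_self]
    exact dvd_zero _

theorem mem_iteratedWreath_of_apply_eq_add {σ : Equiv.Perm R} (c : R)
    (hσ : ∀ i, σ i = i + c) : σ ∈ iteratedWreath R p :=
  mem_iteratedWreath_of_sub_apply (by simp [hσ]) (by simp [hσ])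

theorem dvd_pow_apply_sub {d : R} {τ : Equiv.Perm R} (hτ : ∀ x, d ∣ τ x - x) (m : ℕ) (x : R) :
    d ∣ (τ ^ m) x - x := by
  induction m with
  | zero => simp
  | succ m ih =>
    rw [pow_succ', Equiv.Perm.mul_apply, show τ ((τ ^ m) x) - x
      = (τ ((τ ^ m) x) - (τ ^ m) x) + ((τ ^ m) x - x) by ring]
    exact dvd_add (hτ _) ih

theorem dvd_pow_pow_apply_sub {σ : Equiv.Perm R} (hσ : σ ∈ iteratedWreath R p) (k : ℕ) (i : R) :
    (p : R) ^ k ∣ (σ ^ p ^ k) i - i := by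
  induction k generalizing i with
  | zero => simp
  | succ k ih =>
    set τ := σ ^ p ^ k
    have hτ : τ ∈ iteratedWreath R p := pow_mem hσ _
    -- modulo `p ^ (k + 1)`, `τ` translates the class of `i` modulo `p ^ k` by `τ i - i`
    have htransl : ∀ m : ℕ, (p : R) ^ (k + 1) ∣ (τ ^ m) i - i - m * (τ i - i) := by
      intro m
      induction m with
      | zero => simp
      | succ m ihm =>
        have := dvd_add (hτ k _ i (dvd_pow_apply_sub ih m i)) ihm
        rwa [pow_succ' τ m, Equiv.Perm.mul_apply, Nat.cast_succ,
          show τ ((τ ^ m) i) - i - (m + 1) * (τ i - i)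
            = τ ((τ ^ m) i) - (τ ^ m) i - (τ i - i) + ((τ ^ m) i - i - m * (τ i - i)) by ring]
    have hp : (p : R) ^ (k + 1) ∣ p * (τ i - i) := by
      rw [pow_succ']
      exact mul_dvd_mul_left _ (ih i)
    have := dvd_add (htransl p) hp
    rwa [sub_add_cancel, ← pow_mul, ← pow_succ] at this

end IteratedWreath

theorem ZMod.val_mod_eq_of_natCast_dvd_sub {n p : ℕ} [NeZero n] (hpn : p ∣ n) {i j : ZMod n}
    (h : (p : ZMod n) ∣ i - j) : i.val % p = j.val % p := by
  have := map_dvd (ZMod.castHom hpn (ZMod p)) h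
  rw [map_natCast, ZMod.natCast_self, zero_dvd_iff, map_sub, sub_eq_zero, ZMod.castHom_apply,
    ZMod.castHom_apply, ZMod.cast_eq_val, ZMod.cast_eq_val] at this
  exact (ZMod.natCast_eq_natCast_iff' _ _ _).1 this

theorem ZMod.mem_iteratedWreath_of_cycle_blocks {n p : ℕ} [NeZero n] (hpn : p ∣ n)
    {σ : Equiv.Perm (ZMod n)}
    (hσ : ∀ i, σ i = if i.val % p = p - 1 then i - ((p : ZMod n) - 1) else i + 1) :
    σ ∈ iteratedWreath (ZMod n) p := by
  have hsub : ∀ i, σ i - i = if i.val % p = p - 1 then (1 - p : ZMod n) else 1 := by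
    intro i
    rw [hσ]
    split_ifs <;> ring
  refine mem_iteratedWreath_of_sub_apply (fun i j => ?_) (fun i j hij => ?_)
  · rw [hsub, hsub]
    split_ifs
    · simp
    · exact ⟨-1, by ring⟩
    · exact ⟨1, by ring⟩
    · simp
  · rw [hsub, hsub, ZMod.val_mod_eq_of_natCast_dvd_sub hpn hij]

/-- Proposition 4.1: for `n = p^l`, the subgroup of the symmetric group on `ℤ/n` generated by
`λ : i ↦ i + 1` and `μ` (cycling each block of `p` consecutive residues) satisfies `x ^ n = 1`
for all its elements; in particular it is a finite `p`-group. -/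
theorem stmt_5 (p l n : ℕ) (hp : p.Prime) (hl : 1 ≤ l) (hn : n = p ^ l)
    (lam mu : Equiv.Perm (ZMod n))
    (hlam : ∀ i : ZMod n, lam i = i + 1)
    (hmu : ∀ i : ZMod n,
      mu i = if i.val % p = p - 1 then i - ((p : ZMod n) - 1) else i + 1) :
    ∀ x ∈ Subgroup.closure ({lam, mu} : Set (Equiv.Perm (ZMod n))), x ^ n = 1 := by
  subst hn
  intro x hx
  have : NeZero (p ^ l) := ⟨pow_ne_zero _ hp.ne_zero⟩
  have hgen : {lam, mu} ⊆ (iteratedWreath (ZMod (p ^ l)) p : Set _) := by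
    rintro σ (rfl | rfl)
    exacts [mem_iteratedWreath_of_apply_eq_add 1 hlam,
      ZMod.mem_iteratedWreath_of_cycle_blocks (dvd_pow_self p (by omega)) hmu]
  have hxW : x ∈ iteratedWreath (ZMod (p ^ l)) p := by
    rw [← Subgroup.mem_toSubmonoid, Subgroup.closure_toSubmonoid_of_finite] at hx
    exact Submonoid.closure_le.2 hgen hx
  ext i
  have := dvd_pow_pow_apply_sub hxW l i
  rwa [← Nat.cast_pow, ZMod.natCast_self, zero_dvd_iff, sub_eq_zero] at this
end

section
/- Let p be a prime and define bijections λ∞ and μ∞ of ℤ by λ∞(i) = i+1, and μ∞(i) = i+1 if i ≢ p−1 (mod p), μ∞(i) = i−(p−1) if i ≡ p−1 (mod p). Then for every i ∈ ℤ with i ≡ 0 (mod p), the commutator [μ∞, λ∞] = μ∞⁻¹λ∞⁻¹μ∞λ∞ sends i to i + p. In particular, the element μ∞⁻¹·(λ∞⁻¹μ∞λ∞) of the group of bijections of ℤ has infinite order. -/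
/-!
Write `i = p k`. Going backwards through the commutator, `μ⁻¹` sends `p k` to the last residue
`p k + p - 1` of its block, `λ⁻¹` moves it to `p k + p - 2`, which is not a last residue, so `μ`
and `λ` each add one: the block `p k` is sent to the next block `p (k + 1)`. Hence the
commutator translates `p ℤ` by `p`, and its orbit through `0` is infinite.
-/

open Equiv

theorem Int.emod_mul_add_of_lt {p a : ℤ} (k : ℤ) (ha₀ : 0 ≤ a) (hap : a < p) :
    (p * k + a) % p = a := by
  rw [add_comm, Int.add_mul_emod_self_left, Int.emod_eq_of_lt ha₀ hap]

theorem Equiv.Perm.pow_apply_zero_eq_mul {σ : Perm ℤ} {c : ℤ}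
    (hσ : ∀ i, c ∣ i → σ i = i + c) (n : ℕ) : (σ ^ n) 0 = n * c := by
  induction n with
  | zero => simp
  | succ n ih =>
    rw [pow_succ', Perm.mul_apply, ih, hσ _ (dvd_mul_left c n)]
    push_cast
    ring

theorem Equiv.Perm.not_isOfFinOrder_of_translates_multiples {σ : Perm ℤ} {c : ℤ} (hc : c ≠ 0)
    (hσ : ∀ i, c ∣ i → σ i = i + c) : ¬IsOfFinOrder σ := by
  rintro hfin
  obtain ⟨n, hn, hpow⟩ := isOfFinOrder_iff_pow_eq_one.mp hfin
  have h := σ.pow_apply_zero_eq_mul hσ n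
  rw [hpow, Perm.one_apply, eq_comm, mul_eq_zero] at h
  omega

section Commutator

variable {p : ℤ} {lam mu : Perm ℤ} (hlam : ∀ i, lam i = i + 1)
  (hmu : ∀ i, mu i = if i % p = p - 1 then i - (p - 1) else i + 1)
include hlam hmu

theorem commutator_apply_of_dvd (hp : 2 ≤ p) {i : ℤ} (hi : p ∣ i) :
    (lam * mu * lam⁻¹ * mu⁻¹) i = i + p := by
  obtain ⟨k, rfl⟩ := hi
  have hmu_inv : mu⁻¹ (p * k) = p * k + (p - 1) := by
    rw [Perm.inv_eq_iff_eq, hmu, if_pos (Int.emod_mul_add_of_lt k (by omega) (by omega))]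
    ring
  have hlam_inv : lam⁻¹ (p * k + (p - 1)) = p * k + (p - 2) := by
    rw [Perm.inv_eq_iff_eq, hlam]
    ring
  have hmu_step : mu (p * k + (p - 2)) = p * k + (p - 1) := by
    rw [hmu, if_neg (by rw [Int.emod_mul_add_of_lt k (by omega) (by omega)]; omega)]
    ring
  simp only [Perm.mul_apply]
  rw [hmu_inv, hlam_inv, hmu_step, hlam]
  ring

end Commutator

/-- Statement 2 of Proposition 4.3, realized on the index set: the commutator
`[μ∞, λ∞]` (written in the paper's right-action convention, i.e. the permutation obtained
by applying `μ∞⁻¹`, then `λ∞⁻¹`, then `μ∞`, then `λ∞`) sends every `i ≡ 0 (mod p)` to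
`i + p`; in particular this element of the permutation group of `ℤ` has infinite order. -/
theorem stmt_7 (p : ℕ) (hp : p.Prime) (lam mu : Equiv.Perm ℤ)
    (hlam : ∀ i : ℤ, lam i = i + 1)
    (hmu : ∀ i : ℤ,
      mu i = if i % (p : ℤ) = (p : ℤ) - 1 then i - ((p : ℤ) - 1) else i + 1) :
    (∀ i : ℤ, i % (p : ℤ) = 0 → (lam * mu * lam⁻¹ * mu⁻¹) i = i + (p : ℤ)) ∧
      ¬ IsOfFinOrder (lam * mu * lam⁻¹ * mu⁻¹) := by
  have hp₂ : (2 : ℤ) ≤ p := by exact_mod_cast hp.two_le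
  have htranslate : ∀ i : ℤ, (p : ℤ) ∣ i → (lam * mu * lam⁻¹ * mu⁻¹) i = i + p :=
    fun i => commutator_apply_of_dvd hlam hmu hp₂
  exact ⟨fun i hi => htranslate i (Int.dvd_iff_emod_eq_zero.mpr hi),
    Perm.not_isOfFinOrder_of_translates_multiples (by omega) htranslate⟩
end

section
/- Let T be a free group with basis {t_e : e ∈ E} indexed by the edge set of a connected graph Γ = (V, E). Define a graph Γ' with vertex set V × T and, for each (e, t) ∈ E × T, an edge joining (e(1), t_e·t) to (e(−1), t), where e(1), e(−1) are the endpoints of e. Then Γ' contains no cycle: every simple closed chain in Γ' has length zero. More precisely, if a simple chain of non-zero length joins (u, r) to (w, s), then there is τ ∈ T with τ ≠ 1 and τ·r = s; in particular (u, r) ≠ (w, s). -/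
/-!
Label the edge of `Γ'` over `e` by the letter `(e, true)` when crossed from `e(−1)` to `e(1)` and
by `(e, false)` in the other direction. Crossing an edge multiplies the `T`-coordinate on the left
by its letter, so a chain from `(u, r)` to `(w, s)` with label word `w` gives `mk w * r = s`.
In a simple chain two consecutive letters are never mutually inverse: a letter and the vertex it
is read at determine the next vertex, so an inverse pair would cross the same edge twice. Hence
the label word is reduced, and a reduced word of positive length is not `1`.
-/

open FreeGroup SimpleGraph

namespace FreeGroup

variable {α : Type*} {L : List (α × Bool)}

theorem IsReduced.mk_ne_one (h : IsReduced L) (hL : L ≠ []) : mk L ≠ 1 := by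
  classical
  rw [Ne, ← toWord_eq_nil_iff, toWord_mk, h.reduce_eq]
  exact hL

theorem mk_singleton_not_eq_inv (a : α) (b : Bool) : mk [(a, !b)] = (mk [(a, b)])⁻¹ := by
  simp [inv_mk, invRev]

end FreeGroup

variable {V E : Type*} (v1 v2 : E → V)

-- The graph `Γ'` of the statement.
def derivedGraph : SimpleGraph (V × FreeGroup E) :=
  fromRel fun a b => ∃ (e : E) (t : FreeGroup E), a = (v1 e, of e * t) ∧ b = (v2 e, t)

def LetterStep (p : E × Bool) (x y : V × FreeGroup E) : Prop :=
  (x.1, y.1) = (bif p.2 then (v2 p.1, v1 p.1) else (v1 p.1, v2 p.1)) ∧ y.2 = mk [p] * x.2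

variable {v1 v2}

theorem LetterStep.eq_of_not {e : E} {b : Bool} {x y z : V × FreeGroup E}
    (hxy : LetterStep v1 v2 (e, b) x y) (hyz : LetterStep v1 v2 (e, !b) y z) : z = x := by
  obtain ⟨hxy₁, hxy₂⟩ := hxy
  obtain ⟨hyz₁, hyz₂⟩ := hyz
  refine Prod.ext ?_ ?_
  · cases b <;>
      simp only [Prod.ext_iff, cond_true, cond_false, Bool.not_true, Bool.not_false] at hxy₁ hyz₁ <;>
      exact hyz₁.2.trans hxy₁.1.symm
  · rw [hyz₂, hxy₂, mk_singleton_not_eq_inv, inv_mul_cancel_left]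

theorem exists_letterStep_of_adj {x y : V × FreeGroup E} (h : (derivedGraph v1 v2).Adj x y) :
    ∃ p, LetterStep v1 v2 p x y := by
  rcases ((fromRel_adj _ _ _).mp h).2 with ⟨e, t, rfl, rfl⟩ | ⟨e, t, rfl, rfl⟩
  · exact ⟨(e, false), rfl, (inv_mul_cancel_left (of e) t).symm⟩
  · exact ⟨(e, true), rfl, rfl⟩

section Trail

variable {G : SimpleGraph (V × FreeGroup E)}

theorem exists_isReduced_mk_mul_eq_of_isTrail
    (hadj : ∀ ⦃x y⦄, G.Adj x y → ∃ p, LetterStep v1 v2 p x y)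
    {x y : V × FreeGroup E} (c : G.Walk x y) (hc : c.IsTrail) :
    ∃ w : List (E × Bool), w.length = c.length ∧ IsReduced w ∧ mk w * x.2 = y.2 ∧
      ∀ q ∈ w.getLast?, ∃ z, LetterStep v1 v2 q x z ∧ s(x, z) ∈ c.edges := by
  induction c with
  | nil => exact ⟨[], rfl, IsReduced.nil, one_mul _, by simp⟩
  | @cons x x' y h c ih =>
    obtain ⟨hc', hnotMem⟩ := (Walk.isTrail_cons h c).mp hc
    obtain ⟨w, hlen, hred, hmul, hlast⟩ := ih hc'
    obtain ⟨⟨e, b⟩, hp⟩ := hadj h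
    refine ⟨w ++ [(e, b)], by simp [hlen], ?_, ?_, fun q hq => ⟨x', ?_, by simp⟩⟩
    · refine List.isChain_append.mpr ⟨hred, IsReduced.singleton, fun q hq p' hp' => ?_⟩
      obtain rfl : (e, b) = p' := by simpa using hp'
      intro hqp
      by_contra hne
      obtain ⟨z, hz, hzc⟩ := hlast q hq
      obtain rfl : q = (e, !b) := Prod.ext hqp (Bool.eq_not.mpr hne)
      rw [hp.eq_of_not hz, Sym2.eq_swap] at hzc
      exact hnotMem hzc
    · rw [← mul_mk, mul_assoc, ← hp.2, hmul]
    · obtain rfl : (e, b) = q := by simpa using hq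
      exact hp

theorem exists_ne_one_mul_eq_of_isTrail
    (hadj : ∀ ⦃x y⦄, G.Adj x y → ∃ p, LetterStep v1 v2 p x y)
    {x y : V × FreeGroup E} (c : G.Walk x y) (hc : c.IsTrail) (hpos : 0 < c.length) :
    ∃ τ : FreeGroup E, τ ≠ 1 ∧ τ * x.2 = y.2 := by
  obtain ⟨w, hlen, hred, hmul, -⟩ := exists_isReduced_mk_mul_eq_of_isTrail hadj c hc
  exact ⟨mk w, hred.mk_ne_one (List.ne_nil_of_length_pos (hlen ▸ hpos)), hmul⟩

theorem isAcyclic_of_forall_letterStep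
    (hadj : ∀ ⦃x y⦄, G.Adj x y → ∃ p, LetterStep v1 v2 p x y) : G.IsAcyclic := by
  intro x c hcyc
  obtain ⟨τ, hτ, hτx⟩ := exists_ne_one_mul_eq_of_isTrail hadj c hcyc.isTrail
    (Walk.not_nil_iff_lt_length.mp hcyc.not_nil)
  exact hτ (mul_eq_right.mp hτx)

end Trail

/-- Acyclicity claim in the proof of Proposition 2.4.  `Γ` is a graph with vertex set `V`
and edge set `E`, each edge `e` directed from `e(−1) = v₂ e` to `e(1) = v₁ e`.  The graph
`Γ'` has vertex set `V × T`, where `T` is the free group on `E`, and for each `(e, t)` an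
edge joining `(e(1), t_e · t)` to `(e(−1), t)`.  Then any simple chain (trail) of non-zero
length from `(u, r)` to `(w, s)` yields `τ ∈ T`, `τ ≠ 1`, with `τ · r = s`; in particular
`Γ'` is acyclic. -/
theorem stmt_9 (V E : Type u) (v1 v2 : E → V)
    (G' : SimpleGraph (V × FreeGroup E))
    (hG' : G' = SimpleGraph.fromRel (fun a b =>
      ∃ (e : E) (t : FreeGroup E), a = (v1 e, FreeGroup.of e * t) ∧ b = (v2 e, t))) :
    (∀ (u w : V) (r s : FreeGroup E) (c : G'.Walk (u, r) (w, s)),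
        c.IsTrail → 0 < c.length → ∃ τ : FreeGroup E, τ ≠ 1 ∧ τ * r = s) ∧
      G'.IsAcyclic := by
  have hadj : ∀ ⦃x y⦄, G'.Adj x y → ∃ p, LetterStep v1 v2 p x y := by
    subst hG'
    exact fun _ _ => exists_letterStep_of_adj
  exact ⟨fun _ _ _ _ c hc hpos => exists_ne_one_mul_eq_of_isTrail hadj c hc hpos,
    isAcyclic_of_forall_letterStep hadj⟩
end

section
/- Let G be a group, H a normal subgroup, γ ∈ G, and suppose conjugation by γ acts on H as an automorphism of infinite order (i.e., for every k ≥ 1 there exists h ∈ H with γ⁻ᵏhγᵏ ≠ h). Then for every homomorphism σ from G to a periodic group, ker σ ∩ H ≠ 1. -/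
/-- Final argument in the proof of Theorem 3: if conjugation by `γ` acts on a normal
subgroup `H` as an automorphism of infinite order, then every homomorphism `σ` from `G`
to a periodic group satisfies `ker σ ∩ H ≠ 1`. -/
theorem stmt_13 (G : Type u) [Group G] (H : Subgroup G) [H.Normal] (γ : G)
    (hinf : ∀ k : ℕ, 1 ≤ k → ∃ h ∈ H, γ⁻¹ ^ k * h * γ ^ k ≠ h)
    (Q : Type u) [Group Q] (hQ : ∀ q : Q, IsOfFinOrder q) (σ : G →* Q) :
    σ.ker ⊓ H ≠ ⊥ := by
  intro hbot
  set k := orderOf (σ γ) with hk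
  have hk1 : 1 ≤ k := (hQ (σ γ)).orderOf_pos
  obtain ⟨h, hH, hne⟩ := hinf k hk1
  set x := h⁻¹ * (γ⁻¹ ^ k * h * γ ^ k) with hx
  have hxH : x ∈ H := by
    have : γ⁻¹ ^ k * h * γ ^ k ∈ H := by
      have := Subgroup.Normal.conj_mem ‹H.Normal› h hH (γ⁻¹ ^ k)
      simpa [mul_assoc, inv_pow] using this
    exact H.mul_mem (H.inv_mem hH) this
  have hxker : x ∈ σ.ker := by
    have hσγ : σ (γ ^ k) = 1 := by
      rw [map_pow]; exact pow_orderOf_eq_one (σ γ)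
    have hσγ' : σ (γ⁻¹ ^ k) = 1 := by
      rw [inv_pow, map_inv, hσγ, inv_one]
    simp [MonoidHom.mem_ker, hx, map_mul, hσγ, hσγ']
  have : x ∈ σ.ker ⊓ H := ⟨hxker, hxH⟩
  rw [hbot, Subgroup.mem_bot] at this
  apply hne
  have := congrArg (fun y => h * y) this
  simpa [hx, mul_assoc] using this
end
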